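/- For every n ≥ 1, b((3^n+1)/2) = ((√2+1)^n + (√2−1)^n)/2. -/
import Mathlib


theorem northshield_value_at_midpoint (b : ℕ → ℝ)
    (hb0 : b 0 = 0) (hb1 : b 1 = 1)
    (hrec0 : ∀ n : ℕ, b (3 * n) = b n)
    (hrec1 : ∀ n : ℕ, b (3 * n + 1) = Real.sqrt 2 * b n + b (n + 1))
    (hrec2 : ∀ n : ℕ, b (3 * n + 2) = b n + Real.sqrt 2 * b (n + 1)) :
    ∀ n : ℕ, 1 ≤ n →
      b ((3 ^ n + 1) / 2) =
        ((Real.sqrt 2 + 1) ^ n + (Real.sqrt 2 - 1) ^ n) / 2 := by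
  have key : ∀ n : ℕ, 1 ≤ n →
      b ((3 ^ n - 1) / 2) =
        ((Real.sqrt 2 + 1) ^ n - (Real.sqrt 2 - 1) ^ n) / 2 ∧
      b ((3 ^ n + 1) / 2) =
        ((Real.sqrt 2 + 1) ^ n + (Real.sqrt 2 - 1) ^ n) / 2 := by
    intro n hn
    induction n with
    | zero => omega
    | succ n ih =>
      rcases Nat.lt_or_ge n 1 with h | h
      · interval_cases n
        have h2 : b 2 = Real.sqrt 2 := by
          have := hrec2 0
          simpa [hb0, hb1] using this
        refine ⟨?_, ?_⟩ <;> norm_num [hb1, h2] <;> ring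
      · obtain ⟨ihu, ihv⟩ := ih h
        have hodd : 3 ^ n % 2 = 1 := by
          have := Nat.pow_mod 3 n 2
          simp at this
          omega
        have hpos : 1 ≤ 3 ^ n := Nat.one_le_pow _ _ (by norm_num)
        have hpow : 3 ^ (n + 1) = 3 * 3 ^ n := by ring
        have h1 : (3 ^ (n + 1) - 1) / 2 = 3 * ((3 ^ n - 1) / 2) + 1 := by omega
        have h2 : (3 ^ (n + 1) + 1) / 2 = 3 * ((3 ^ n - 1) / 2) + 2 := by omega
        have h3 : (3 ^ n - 1) / 2 + 1 = (3 ^ n + 1) / 2 := by omega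
        rw [h1, h2, hrec1, hrec2, h3, ihu, ihv]
        constructor <;> ring
  intro n hn
  exact (key n hn).2
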